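/- There exists an absolute constant c > 0 such that for every positive integer m there is an N with the following property: for every n ≥ N there is a placement of exactly G(m) queens on the n×n board whose number of attacked squares is at most m·n + c·m². -/

import Mathlib

/-- The n×n board: squares (x,y) ∈ ℤ×ℤ with 1 ≤ x ≤ n and 1 ≤ y ≤ n. -/
noncomputable def board (n : ℕ) : Finset (ℤ × ℤ) := Finset.Icc 1 (n : ℤ) ×ˢ Finset.Icc 1 (n : ℤ)

/-- A line of the board: a row (fixed y), a column (fixed x), a positive
diagonal (fixed x − y), or a negative diagonal (fixed x + y). -/
inductive Line : Type where
  | row : ℤ → Line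
  | col : ℤ → Line
  | posDiag : ℤ → Line
  | negDiag : ℤ → Line
deriving DecidableEq

/-- The defining condition for a point to be on a given line. -/
def Line.pred : Line → ℤ × ℤ → Prop
  | .row b, p => p.2 = b
  | .col a, p => p.1 = a
  | .posDiag d, p => p.1 - p.2 = d
  | .negDiag s, p => p.1 + p.2 = s

instance (L : Line) (p : ℤ × ℤ) : Decidable (L.pred p) :=
  match L with
  | .row b => inferInstanceAs (Decidable (p.2 = b))
  | .col a => inferInstanceAs (Decidable (p.1 = a))
  | .posDiag d => inferInstanceAs (Decidable (p.1 - p.2 = d))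
  | .negDiag s => inferInstanceAs (Decidable (p.1 + p.2 = s))

/-- The set of squares of the n×n board lying on a line. -/
noncomputable def Line.squares (n : ℕ) (L : Line) : Finset (ℤ × ℤ) := (board n).filter L.pred

/-- The length of a line: its number of board squares. -/
noncomputable def Line.length (n : ℕ) (L : Line) : ℕ := (L.squares n).card

/-- Whether a line is a diagonal (of either orientation). -/
def Line.isDiag : Line → Prop
  | .posDiag _ => True
  | .negDiag _ => True
  | _ => False

/-- The set of board squares attacked by a placement S of queens: squares q on
the board such that some queen p ∈ S with p ≠ q shares a row, column, or
diagonal with q. -/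
noncomputable def attacked (n : ℕ) (S : Finset (ℤ × ℤ)) : Finset (ℤ × ℤ) :=
  S.biUnion fun p => (board n).filter fun q =>
    q ≠ p ∧ (p.1 = q.1 ∨ p.2 = q.2 ∨ p.1 - p.2 = q.1 - q.2 ∨ p.1 + p.2 = q.1 + q.2)

/-- G(m) = ⌊m²/12⌋ + 1 if m ≡ 3, 6, 9 (mod 12) or m = 10; ⌊m²/12⌋ otherwise. -/
def G (m : ℕ) : ℕ :=
  if m % 12 = 3 ∨ m % 12 = 6 ∨ m % 12 = 9 ∨ m = 10 then m ^ 2 / 12 + 1 else m ^ 2 / 12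

/-!
Queens near a corner of the board attack, apart from `O(m²)` squares near that corner, only the
squares on the long lines through them, and a row, column or diagonal has at most `n` squares.
The hexagon cut out of the box `[1, a] × [1, b]` by the positive diagonals `-l ≤ x - y ≤ h` lies
on `a + b + l + h + 1` long lines (its negative diagonals are short); with `a + b + l + h + 1 = m`,
`a ≈ b ≈ m / 3` and `l ≈ h ≈ m / 6` it has exactly `G m` squares, unless `m = 10` or
`m ≡ 6 (mod 12)`. In the latter case a copy of one hexagon is put in each corner: adjacent corners
share rows or columns and opposite corners share the diagonals near a main diagonal, which gains
the one extra queen. For `m = 10` a `3 × 3` grid of spacing `n / 2` works, since its diagonals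
other than the two main ones have length about `n / 2`.
-/

open Finset

lemma mem_board {n : ℕ} {q : ℤ × ℤ} :
    q ∈ board n ↔ 1 ≤ q.1 ∧ q.1 ≤ n ∧ 1 ≤ q.2 ∧ q.2 ≤ n := by
  simp [board, and_assoc]

namespace Line

def through (p : ℤ × ℤ) : Finset Line :=
  {row p.2, col p.1, posDiag (p.1 - p.2), negDiag (p.1 + p.2)}

def family (R C D E : Finset ℤ) : Finset Line :=
  R.image row ∪ C.image col ∪ D.image posDiag ∪ E.image negDiag

section family

variable {R C D E : Finset ℤ}

@[simp] lemma row_mem_family {b : ℤ} : row b ∈ family R C D E ↔ b ∈ R := by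
  simp [family]

@[simp] lemma col_mem_family {a : ℤ} : col a ∈ family R C D E ↔ a ∈ C := by
  simp [family]

@[simp] lemma posDiag_mem_family {d : ℤ} : posDiag d ∈ family R C D E ↔ d ∈ D := by
  simp [family]

@[simp] lemma negDiag_mem_family {s : ℤ} : negDiag s ∈ family R C D E ↔ s ∈ E := by
  simp [family]

lemma through_subset_family {p : ℤ × ℤ} : through p ⊆ family R C D E ↔
    p.2 ∈ R ∧ p.1 ∈ C ∧ p.1 - p.2 ∈ D ∧ p.1 + p.2 ∈ E := by
  simp [through, insert_subset_iff]

lemma family_union {R' C' D' E' : Finset ℤ} :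
    family R C D E ∪ family R' C' D' E' = family (R ∪ R') (C ∪ C') (D ∪ D') (E ∪ E') := by
  ext L
  cases L <;> simp

lemma forall_mem_family_iff {P : Line → Prop} : (∀ L ∈ family R C D E, P L) ↔
    (∀ b ∈ R, P (row b)) ∧ (∀ a ∈ C, P (col a)) ∧ (∀ d ∈ D, P (posDiag d)) ∧
      ∀ s ∈ E, P (negDiag s) := by
  simp [family, or_imp, forall_and]

lemma card_family_le : #(family R C D E) ≤ #R + #C + #D + #E := by
  unfold family
  grw [card_union_le, card_union_le, card_union_le, card_image_le, card_image_le, card_image_le,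
    card_image_le]

end family

variable {n : ℕ}

lemma mem_squares {L : Line} {q : ℤ × ℤ} : q ∈ L.squares n ↔ q ∈ board n ∧ L.pred q :=
  mem_filter

lemma length_le_of_forall_mem_image {L : Line} {lo hi : ℤ} (f : ℤ → ℤ × ℤ)
    (h : ∀ q ∈ board n, L.pred q → ∃ x ∈ Icc lo hi, f x = q) :
    L.length n ≤ (hi + 1 - lo).toNat := by
  have hsub : L.squares n ⊆ (Icc lo hi).image f := fun q hq => by
    rw [mem_squares] at hq
    simpa using h q hq.1 hq.2
  simpa [length] using (card_le_card hsub).trans card_image_le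

lemma length_row_le (b : ℤ) : (row b).length n ≤ n := by
  have := length_le_of_forall_mem_image (n := n) (L := row b) (lo := 1) (hi := n)
    (fun x => (x, b)) fun q hq hb =>
      ⟨q.1, by rw [mem_board] at hq; exact mem_Icc.2 ⟨hq.1, hq.2.1⟩, Prod.ext rfl hb.symm⟩
  omega

lemma length_col_le (a : ℤ) : (col a).length n ≤ n := by
  have := length_le_of_forall_mem_image (n := n) (L := col a) (lo := 1) (hi := n)
    (fun y => (a, y)) fun q hq ha =>
      ⟨q.2, by rw [mem_board] at hq; exact mem_Icc.2 ⟨hq.2.2.1, hq.2.2.2⟩, Prod.ext ha.symm rfl⟩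
  omega

lemma length_posDiag_le (d : ℤ) : (posDiag d).length n ≤ (min (n - d) (n + d)).toNat := by
  have := length_le_of_forall_mem_image (n := n) (L := posDiag d) (lo := max 1 (1 + d))
    (hi := min n (n + d)) (fun x => (x, x - d))
    fun q hq hd => ⟨q.1, by rw [mem_board] at hq; rw [mem_Icc]; simp only [pred] at hd; omega,
      Prod.ext rfl (by simp only [pred] at hd; omega)⟩
  omega

lemma length_negDiag_le (s : ℤ) :
    (negDiag s).length n ≤ (min (s - 1) (2 * n + 1 - s)).toNat := by
  have := length_le_of_forall_mem_image (n := n) (L := negDiag s) (lo := max 1 (s - n))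
    (hi := min n (s - 1)) (fun x => (x, s - x))
    fun q hq hs => ⟨q.1, by rw [mem_board] at hq; rw [mem_Icc]; simp only [pred] at hs; omega,
      Prod.ext rfl (by simp only [pred] at hs; omega)⟩
  omega

lemma length_le (L : Line) : L.length n ≤ n := by
  cases L with
  | row b => exact length_row_le b
  | col a => exact length_col_le a
  | posDiag d => have := length_posDiag_le (n := n) d; omega
  | negDiag s => have := length_negDiag_le (n := n) s; omega

end Line

lemma attacked_subset_biUnion_squares {n : ℕ} {S : Finset (ℤ × ℤ)} {𝓛 : Finset Line}
    (h : ∀ p ∈ S, Line.through p ⊆ 𝓛) : attacked n S ⊆ 𝓛.biUnion (Line.squares n) := by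
  intro q hq
  simp only [attacked, mem_biUnion, mem_filter] at hq
  obtain ⟨p, hp, hq, -, hpq⟩ := hq
  have hL : ∃ L ∈ Line.through p, L.pred q := by
    simp only [Line.through, mem_insert, mem_singleton, exists_eq_or_imp, Line.pred,
      exists_eq_left]
    omega
  obtain ⟨L, hL, hLq⟩ := hL
  exact mem_biUnion.2 ⟨L, h p hp hL, Line.mem_squares.2 ⟨hq, hLq⟩⟩

lemma card_attacked_le_sum_length {n : ℕ} {S : Finset (ℤ × ℤ)} {𝓛 : Finset Line}
    (h : ∀ p ∈ S, Line.through p ⊆ 𝓛) : #(attacked n S) ≤ ∑ L ∈ 𝓛, L.length n :=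
  (card_le_card (attacked_subset_biUnion_squares h)).trans card_biUnion_le

lemma Finset.sum_union_le {α : Type*} [DecidableEq α] (s t : Finset α) (f : α → ℕ) :
    ∑ x ∈ s ∪ t, f x ≤ ∑ x ∈ s, f x + ∑ x ∈ t, f x := by
  rw [← sum_union_inter]
  exact Nat.le_add_right _ _

lemma card_attacked_le_of_cover {n k : ℕ} {S : Finset (ℤ × ℤ)} (long short : Finset Line)
    (hcover : ∀ p ∈ S, Line.through p ⊆ long ∪ short) (hshort : ∀ L ∈ short, L.length n ≤ k) :
    #(attacked n S) ≤ #long * n + #short * k := by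
  grw [card_attacked_le_sum_length hcover, sum_union_le,
    sum_le_card_nsmul long _ n fun L _ => L.length_le, sum_le_card_nsmul short _ k hshort]
  simp

noncomputable def diagSegment (d lo hi : ℤ) : Finset (ℤ × ℤ) :=
  (Icc lo hi).image fun x => (x, x - d)

section diagSegment

variable {d lo hi : ℤ}

lemma mem_diagSegment {p : ℤ × ℤ} :
    p ∈ diagSegment d lo hi ↔ lo ≤ p.1 ∧ p.1 ≤ hi ∧ p.1 - p.2 = d := by
  simp only [diagSegment, mem_image, mem_Icc]
  constructor
  · rintro ⟨x, hx, rfl⟩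
    simpa using hx
  · rintro ⟨h₁, h₂, h₃⟩
    exact ⟨p.1, ⟨h₁, h₂⟩, Prod.ext rfl (by omega)⟩

lemma card_diagSegment : #(diagSegment d lo hi) = (hi + 1 - lo).toNat := by
  rw [diagSegment, card_image_of_injective _ fun x y hxy => congrArg Prod.fst hxy, Int.card_Icc]

lemma card_biUnion_diagSegment {k : ℕ} {d lo hi : ℕ → ℤ} (hd : Set.InjOn d (range k)) :
    #((range k).biUnion fun i => diagSegment (d i) (lo i) (hi i)) =
      ∑ i ∈ range k, (hi i + 1 - lo i).toNat := by
  rw [card_biUnion fun i hi j hj hij => disjoint_left.2 fun p hpi hpj => hij <| hd hi hj <| by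
    rw [mem_diagSegment] at hpi hpj; omega]
  simp only [card_diagSegment]

end diagSegment

lemma two_mul_sum_range_add (c k : ℕ) : 2 * ∑ i ∈ range k, (c + i) + k = k * (2 * c + k) := by
  induction k with
  | zero => simp
  | succ k ih => rw [sum_range_succ]; linarith

/-- The hexagon in the corner `[1, c + h] × [1, e + l]` between the diagonals `x - y = -l` and
`x - y = h`; its diagonals `x - y = h, …, 0` carry `c, …, c + h` points and its diagonals
`x - y = -l, …, -1` carry `e, …, e + l - 1` points. -/
noncomputable def hexagon (c e h l : ℕ) : Finset (ℤ × ℤ) :=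
  ((range (h + 1)).biUnion fun i => diagSegment ((h : ℤ) - i) (1 + (h : ℤ) - i) (c + h)) ∪
    (range l).biUnion fun j => diagSegment ((j : ℤ) - l) 1 (e + j)

section hexagon

variable {c e h l : ℕ}

lemma mem_hexagon {p : ℤ × ℤ} : p ∈ hexagon c e h l ↔
    (∃ i < h + 1, 1 + (h : ℤ) - i ≤ p.1 ∧ p.1 ≤ c + h ∧ p.1 - p.2 = h - i) ∨
      ∃ j < l, 1 ≤ p.1 ∧ p.1 ≤ e + j ∧ p.1 - p.2 = (j : ℤ) - l := by
  simp [hexagon, mem_diagSegment]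

lemma bounds_of_mem_hexagon (hle : c + h ≤ e + l) (hle' : e + l ≤ c + h + 1) {p : ℤ × ℤ}
    (hp : p ∈ hexagon c e h l) :
    1 ≤ p.1 ∧ p.1 ≤ c + h ∧ 1 ≤ p.2 ∧ p.2 ≤ e + l ∧ -(l : ℤ) ≤ p.1 - p.2 ∧ p.1 - p.2 ≤ h := by
  rcases mem_hexagon.1 hp with ⟨i, hi, h₁, h₂, h₃⟩ | ⟨j, hj, h₁, h₂, h₃⟩ <;> omega

lemma two_mul_card_hexagon_add :
    2 * #(hexagon c e h l) + l = (h + 1) * (2 * c + h) + l * (2 * e + l) := by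
  have hdisj : Disjoint ((range (h + 1)).biUnion fun i =>
      diagSegment ((h : ℤ) - i) (1 + (h : ℤ) - i) (c + h))
      ((range l).biUnion fun j => diagSegment ((j : ℤ) - l) 1 (e + j)) := by
    simp only [disjoint_left, mem_biUnion, mem_range, mem_diagSegment]
    omega
  rw [hexagon, card_union_of_disjoint hdisj,
    card_biUnion_diagSegment fun i _ j _ hij => by omega,
    card_biUnion_diagSegment fun i _ j _ hij => by omega]
  have hlow : ∑ i ∈ range (h + 1), ((c + h : ℤ) + 1 - (1 + (h : ℤ) - i)).toNat =
      ∑ i ∈ range (h + 1), (c + i) := sum_congr rfl fun i _ => by omega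
  have hup : ∑ j ∈ range l, ((e + j : ℤ) + 1 - 1).toNat = ∑ j ∈ range l, (e + j) :=
    sum_congr rfl fun j _ => by omega
  rw [hlow, hup]
  linarith [two_mul_sum_range_add c (h + 1), two_mul_sum_range_add e l]

end hexagon

lemma hexagon_subset_board {c e h l n : ℕ} (hle : c + h ≤ e + l) (hle' : e + l ≤ c + h + 1)
    (hn : e + l ≤ n) : hexagon c e h l ⊆ board n := fun p hp => by
  have := bounds_of_mem_hexagon hle hle' hp
  rw [mem_board]
  omega

lemma card_attacked_hexagon_le {c e h l n : ℕ} (hle : c + h ≤ e + l) (hle' : e + l ≤ c + h + 1) :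
    #(attacked n (hexagon c e h l)) ≤ (c + e + 2 * h + 2 * l + 1) * n + (c + h + e + l) ^ 2 := by
  set k := c + h + e + l
  set long := Line.family (Icc 1 (e + l : ℤ)) (Icc 1 (c + h : ℤ)) (Icc (-l : ℤ) h) ∅
  set short := Line.family ∅ ∅ ∅ (Icc 2 (k : ℤ))
  have hcover : ∀ p ∈ hexagon c e h l, Line.through p ⊆ long ∪ short := fun p hp => by
    have := bounds_of_mem_hexagon hle hle' hp
    simp only [long, short, Line.family_union, Line.through_subset_family, mem_union, mem_Icc,
      notMem_empty, or_false, false_or]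
    omega
  have hshort : ∀ L ∈ short, L.length n ≤ k := by
    simp only [short, Line.forall_mem_family_iff, notMem_empty, IsEmpty.forall_iff, implies_true,
      mem_Icc, true_and]
    intro s hs
    have := Line.length_negDiag_le (n := n) s
    omega
  have hlong_card : #long ≤ c + e + 2 * h + 2 * l + 1 :=
    Line.card_family_le.trans <| by simp only [Int.card_Icc, card_empty]; omega
  have hshort_card : #short ≤ k := Line.card_family_le.trans <| by simp
  calc #(attacked n (hexagon c e h l))
      ≤ #long * n + #short * k := card_attacked_le_of_cover long short hcover hshort
    _ ≤ (c + e + 2 * h + 2 * l + 1) * n + k * k := by gcongr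
    _ = _ := by ring

def edgeDist (n : ℕ) (x : ℤ) : ℤ := min x (n + 1 - x)

/-- For `C` in the lower left quarter of the board, the union of the images of `C` under the
reflections of the board in its two midlines. -/
noncomputable def fourCorners (n : ℕ) (C : Finset (ℤ × ℤ)) : Finset (ℤ × ℤ) :=
  (board n).filter fun q => (edgeDist n q.1, edgeDist n q.2) ∈ C

lemma mem_fourCorners {n : ℕ} {C : Finset (ℤ × ℤ)} {q : ℤ × ℤ} :
    q ∈ fourCorners n C ↔ q ∈ board n ∧ (edgeDist n q.1, edgeDist n q.2) ∈ C :=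
  mem_filter

lemma card_fourCorners {n : ℕ} {C : Finset (ℤ × ℤ)}
    (hC : ∀ p ∈ C, 1 ≤ p.1 ∧ 2 * p.1 ≤ n ∧ 1 ≤ p.2 ∧ 2 * p.2 ≤ n) :
    #(fourCorners n C) = 4 * #C := by
  have hfiber : ∀ p ∈ C, {q ∈ fourCorners n C | (edgeDist n q.1, edgeDist n q.2) = p} =
      ({p.1, n + 1 - p.1} : Finset ℤ) ×ˢ ({p.2, n + 1 - p.2} : Finset ℤ) := fun p hp => by
    obtain ⟨h₁, h₂, h₃, h₄⟩ := hC p hp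
    refine Finset.ext fun q => ?_
    simp only [mem_filter, mem_fourCorners, mem_board, mem_product, mem_insert, mem_singleton,
      Prod.ext_iff, edgeDist]
    constructor
    · rintro ⟨⟨hb, -⟩, hx, hy⟩
      omega
    · rintro ⟨hx, hy⟩
      have hfold : (min q.1 (n + 1 - q.1), min q.2 (n + 1 - q.2)) = p :=
        Prod.ext (by omega) (by omega)
      exact ⟨⟨by omega, hfold ▸ hp⟩, by omega, by omega⟩
  rw [card_eq_sum_card_fiberwise (f := fun q => (edgeDist n q.1, edgeDist n q.2))
    fun q hq => (mem_fourCorners.1 hq).2, mul_comm, ← smul_eq_mul, ← sum_const]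
  refine sum_congr rfl fun p hp => ?_
  obtain ⟨h₁, h₂, h₃, h₄⟩ := hC p hp
  rw [hfiber p hp, card_product, card_pair (by omega), card_pair (by omega)]

lemma card_attacked_fourCorners_hexagon_le (n v : ℕ) :
    #(attacked n (fourCorners n (hexagon (v + 1) (v + 1) v v))) ≤
      (12 * v + 6) * n + (12 * v + 6) ^ 2 := by
  set a : ℤ := 2 * v + 1
  set edges := Icc 1 a ∪ Icc (n + 1 - a) n
  set long := Line.family edges edges (Icc (-v : ℤ) v) (Icc (n + 1 - v : ℤ) (n + 1 + v))
  set short := Line.family ∅ ∅ (Icc (n + 1 - 2 * a) (n - 1) ∪ Icc (1 - n) (2 * a - 1 - n))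
    (Icc 2 (2 * a) ∪ Icc (2 * n + 2 - 2 * a) (2 * n))
  have hcover : ∀ q ∈ fourCorners n (hexagon (v + 1) (v + 1) v v),
      Line.through q ⊆ long ∪ short := fun q hq => by
    rw [mem_fourCorners, mem_board] at hq
    have := bounds_of_mem_hexagon le_rfl (by omega) hq.2
    simp only [edgeDist] at this
    simp only [long, short, edges, Line.family_union, Line.through_subset_family, mem_union,
      mem_Icc, notMem_empty]
    omega
  have hshort : ∀ L ∈ short, L.length n ≤ 2 * (2 * v + 1) := by
    simp only [short, Line.forall_mem_family_iff, notMem_empty, IsEmpty.forall_iff, implies_true,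
      mem_union, mem_Icc, true_and]
    refine ⟨fun d hd => ?_, fun s hs => ?_⟩
    · have := Line.length_posDiag_le (n := n) d
      omega
    · have := Line.length_negDiag_le (n := n) s
      omega
  have hlong_card : #long ≤ 12 * v + 6 := Line.card_family_le.trans <| by
    grw [card_union_le]
    simp only [Int.card_Icc]
    omega
  have hshort_card : #short ≤ 4 * (2 * (2 * v + 1)) := Line.card_family_le.trans <| by
    grw [card_union_le, card_union_le]
    simp only [Int.card_Icc, card_empty]
    omega
  calc #(attacked n (fourCorners n (hexagon (v + 1) (v + 1) v v)))
      ≤ #long * n + #short * (2 * (2 * v + 1)) :=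
        card_attacked_le_of_cover long short hcover hshort
    _ ≤ (12 * v + 6) * n + 4 * (2 * (2 * v + 1)) * (2 * (2 * v + 1)) := by gcongr
    _ ≤ _ := by nlinarith

/-- For `2 * M ≈ n`, the diagonals through points of this grid other than `x - y = 0` and
`x + y = 2 * M + 2` have length at most about `n / 2`. -/
noncomputable def grid (M : ℤ) : Finset (ℤ × ℤ) :=
  ({2, M + 1, 2 * M} : Finset ℤ) ×ˢ ({2, M + 1, 2 * M} : Finset ℤ)

section grid

variable {M : ℤ} {n : ℕ}

lemma card_grid (hM : 2 ≤ M) : #(grid M) = 9 := by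
  have : #({2, M + 1, 2 * M} : Finset ℤ) = 3 :=
    card_eq_three.2 ⟨2, M + 1, 2 * M, by omega, by omega, by omega, rfl⟩
  rw [grid, card_product, this]

lemma grid_subset_board (hM : 1 ≤ M) (hn : 2 * M ≤ n) : grid M ⊆ board n := fun q hq => by
  simp only [grid, mem_product, mem_insert, mem_singleton] at hq
  rw [mem_board]
  omega

lemma card_attacked_grid_le (hn : 2 * M ≤ n) (hn' : n ≤ 2 * M + 1) :
    #(attacked n (grid M)) ≤ 10 * n + 20 := by
  set g : Finset ℤ := {2, M + 1, 2 * M}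
  set long := Line.family g g {0} {2 * M + 2}
  set medium := Line.family ∅ ∅ {M - 1, 1 - M} {M + 3, 3 * M + 1}
  set short := Line.family ∅ ∅ {2 * M - 2, 2 - 2 * M} {4, 4 * M}
  have hcover : ∀ q ∈ grid M, Line.through q ⊆ long ∪ medium ∪ short := fun q hq => by
    simp only [grid, mem_product, mem_insert, mem_singleton] at hq
    simp only [long, medium, short, g, Line.family_union, Line.through_subset_family, mem_union,
      mem_insert, mem_singleton, notMem_empty]
    omega
  have hmedium : ∀ L ∈ medium, L.length n ≤ M.toNat + 2 := by
    simp only [medium, Line.forall_mem_family_iff, notMem_empty, IsEmpty.forall_iff, implies_true,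
      mem_insert, mem_singleton, true_and]
    refine ⟨fun d hd => ?_, fun s hs => ?_⟩
    · have := Line.length_posDiag_le (n := n) d
      omega
    · have := Line.length_negDiag_le (n := n) s
      omega
  have hshort : ∀ L ∈ short, L.length n ≤ 3 := by
    simp only [short, Line.forall_mem_family_iff, notMem_empty, IsEmpty.forall_iff, implies_true,
      mem_insert, mem_singleton, true_and]
    refine ⟨fun d hd => ?_, fun s hs => ?_⟩
    · have := Line.length_posDiag_le (n := n) d
      omega
    · have := Line.length_negDiag_le (n := n) s
      omega
  have hlong_card : #long ≤ 8 := Line.card_family_le.trans <| by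
    grw [card_le_three, card_singleton, card_singleton]
  have hmedium_card : #medium ≤ 4 := Line.card_family_le.trans <| by
    grw [card_le_two, card_le_two]; simp
  have hshort_card : #short ≤ 4 := Line.card_family_le.trans <| by
    grw [card_le_two, card_le_two]; simp
  calc #(attacked n (grid M))
      ≤ ∑ L ∈ long ∪ medium ∪ short, L.length n := card_attacked_le_sum_length hcover
    _ ≤ #long * n + #medium * (M.toNat + 2) + #short * 3 := by
      grw [sum_union_le, sum_union_le, sum_le_card_nsmul long _ n fun L _ => L.length_le,
        sum_le_card_nsmul medium _ _ hmedium, sum_le_card_nsmul short _ _ hshort]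
      simp
    _ ≤ 8 * n + 4 * (M.toNat + 2) + 4 * 3 := by gcongr
    _ ≤ 10 * n + 20 := by omega

end grid

lemma G_eq_of_sq_eq {m q r : ℕ} (hsq : m ^ 2 = 12 * q + r) (hr : r < 12) :
    G m = q + if m % 12 = 3 ∨ m % 12 = 6 ∨ m % 12 = 9 ∨ m = 10 then 1 else 0 := by
  unfold G
  split_ifs <;> omega

lemma exists_hexagon_params {m : ℕ} (hm : 0 < m) (h10 : m ≠ 10) (h6 : m % 12 ≠ 6) :
    ∃ c e h l : ℕ, c + h ≤ e + l ∧ e + l ≤ c + h + 1 ∧ c + e + 2 * h + 2 * l + 1 = m ∧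
      2 * G m + l = (h + 1) * (2 * c + h) + l * (2 * e + l) := by
  obtain ⟨u, hu⟩ : ∃ u, m = 6 * u + 1 ∨ m = 6 * u + 2 ∨ m = 6 * u + 3 ∨ m = 6 * u + 4 ∨
      m = 6 * u + 5 ∨ m = 6 * u + 6 := ⟨(m - 1) / 6, by omega⟩
  rcases hu with rfl | rfl | rfl | rfl | rfl | rfl
  · refine ⟨u, u, u, u, by omega, by omega, by omega, ?_⟩
    rw [G_eq_of_sq_eq (q := 3 * u ^ 2 + u) (r := 1) (by ring) (by norm_num), if_neg (by omega)]
    ring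
  · refine ⟨u, u + 1, u, u, by omega, by omega, by omega, ?_⟩
    rw [G_eq_of_sq_eq (q := 3 * u ^ 2 + 2 * u) (r := 4) (by ring) (by norm_num),
      if_neg (by omega)]
    ring
  · refine ⟨u + 1, u + 1, u, u, by omega, by omega, by omega, ?_⟩
    rw [G_eq_of_sq_eq (q := 3 * u ^ 2 + 3 * u) (r := 9) (by ring) (by norm_num),
      if_pos (by omega)]
    ring
  · refine ⟨u, u + 1, u + 1, u, by omega, by omega, by omega, ?_⟩
    rw [G_eq_of_sq_eq (q := 3 * u ^ 2 + 4 * u + 1) (r := 4) (by ring) (by norm_num),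
      if_neg (by omega)]
    ring
  · refine ⟨u + 1, u + 1, u, u + 1, by omega, by omega, by omega, ?_⟩
    rw [G_eq_of_sq_eq (q := 3 * u ^ 2 + 5 * u + 2) (r := 1) (by ring) (by norm_num),
      if_neg (by omega)]
    ring
  · refine ⟨u + 1, u + 2, u + 1, u, by omega, by omega, by omega, ?_⟩
    rw [G_eq_of_sq_eq (q := 3 * (u + 1) ^ 2) (r := 0) (by ring) (by norm_num), if_neg (by omega)]
    ring

lemma exists_placement {m : ℕ} (hm : 0 < m) : ∃ N, ∀ n ≥ N, ∃ S ⊆ board n,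
    #S = G m ∧ #(attacked n S) ≤ m * n + m ^ 2 := by
  by_cases h10 : m = 10
  · subst h10
    refine ⟨4, fun n hn => ⟨grid (n / 2 : ℕ), grid_subset_board (by omega) (by omega),
      by rw [card_grid (by omega)]; rfl, ?_⟩⟩
    have := card_attacked_grid_le (M := (n / 2 : ℕ)) (n := n) (by omega) (by omega)
    omega
  by_cases h6 : m % 12 = 6
  · obtain ⟨v, rfl⟩ : ∃ v, m = 12 * v + 6 := ⟨m / 12, by omega⟩
    have hcard := two_mul_card_hexagon_add (c := v + 1) (e := v + 1) (h := v) (l := v)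
    refine ⟨12 * v + 6, fun n hn => ⟨fourCorners n (hexagon (v + 1) (v + 1) v v),
      filter_subset _ _, ?_, card_attacked_fourCorners_hexagon_le n v⟩⟩
    rw [card_fourCorners fun p hp => by
        have := bounds_of_mem_hexagon le_rfl (by omega) hp
        omega,
      G_eq_of_sq_eq (q := 12 * v ^ 2 + 12 * v + 3) (r := 0) (by ring) (by norm_num),
      if_pos (by omega)]
    nlinarith
  · obtain ⟨c, e, h, l, hle, hle', hlines, hG⟩ := exists_hexagon_params hm h10 h6
    refine ⟨m, fun n hn => ⟨hexagon c e h l, hexagon_subset_board hle hle' (by omega),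
      by linarith [two_mul_card_hexagon_add (c := c) (e := e) (h := h) (l := l)], ?_⟩⟩
    grw [card_attacked_hexagon_le hle hle', hlines, show c + h + e + l ≤ m by omega]

/-- There is an absolute constant c > 0 such that for every
positive integer m there is an N so that for every n ≥ N there is a placement
of exactly G(m) queens on the n×n board attacking at most m·n + c·m² squares. -/
theorem exists_good_placement : ∃ c : ℝ, 0 < c ∧
    ∀ m : ℕ, 0 < m → ∃ N : ℕ, ∀ n : ℕ, N ≤ n →
    ∃ S : Finset (ℤ × ℤ), S ⊆ board n ∧ S.card = G m ∧
      ((attacked n S).card : ℝ) ≤ (m : ℝ) * n + c * (m : ℝ) ^ 2 := by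
  refine ⟨1, one_pos, fun m hm => ?_⟩
  obtain ⟨N, hN⟩ := exists_placement hm
  refine ⟨N, fun n hn => ?_⟩
  obtain ⟨S, hS, hcard, hattacked⟩ := hN n hn
  exact ⟨S, hS, hcard, by rw [one_mul]; exact_mod_cast hattacked⟩
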